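/- arXiv:1803.02125 — 4 statements merged into one kernel-verified Lean document; each statement's English description precedes it below -/
import Mathlib

section
/- Let $f:X\to X$ be a measurable map with invariant probability measure $\mu_X$, let $Y\subset X$ with $F=f^\tau:Y\to Y$ an induced map with integrable return time $\tau:Y\to\mathbb{Z}^+$ preserving a probability measure $\mu_Y$, and let $h:X\to\mathbb{R}^+$ be measurable. Define the induced roof function $H(y)=\sum_{\ell=0}^{\tau(y)-1}h(f^\ell y)$. Then for all integers $n\ge1$ and all $t>1$, $\mu_Y(H>t)\le \mu_Y(\tau>n)+\bar\tau\,\mu_X(h>t/n)$, where $\bar\tau=\int_Y\tau\,d\mu_Y$ and $\mu_X$ is the measure obtained from $\mu_Y$ by the tower construction (so $\mu_X=\pi_*\mu^\tau$ with $\mu^\tau=(\mu_Y\times\mathrm{counting})/\bar\tau$ on the tower $Y^\tau$ and $\pi(y,\ell)=f^\ell y$). -/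
/-!
If `τ y ≤ n` and each of `h y, h (f y), …, h (f^[τ y - 1] y)` is at most `t / n`, then
`H y ≤ t`. Hence `{H > t}` lies in `{τ > n}` together with the set of `y` whose orbit segment
before return visits `S = {h > t / n}`. By Markov's inequality the latter has `μY`-measure at most
the expected number of such visits, which by the tower construction is `τ̄ · μX S`.
-/

open MeasureTheory Finset
open scoped ENNReal

theorem Finset.sum_range_le_of_forall_le_div {g : ℕ → ℝ} {m n : ℕ} {t : ℝ} (ht : 0 ≤ t)
    (hmn : m ≤ n) (hg : ∀ ℓ < m, g ℓ ≤ t / n) : ∑ ℓ ∈ range m, g ℓ ≤ t := by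
  calc ∑ ℓ ∈ range m, g ℓ ≤ ∑ _ℓ ∈ range m, t / n :=
        sum_le_sum fun ℓ hℓ => hg ℓ (mem_range.mp hℓ)
    _ = m * (t / n) := by rw [sum_const, card_range, nsmul_eq_mul]
    _ ≤ n * (t / n) := by gcongr
    _ ≤ t := by
        rcases n.eq_zero_or_pos with rfl | hn
        · simpa using ht
        · rw [mul_div_cancel₀ t (by positivity)]

theorem ENNReal.mul_inv_mul_cancel_of_le {a b : ℝ≥0∞} (ha : a ≠ ∞) (hba : b ≤ a) :
    a * (a⁻¹ * b) = b := by
  rw [← ENNReal.div_eq_inv_mul]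
  exact ENNReal.mul_div_cancel' (fun h => le_antisymm (h ▸ hba) zero_le)
    (fun h => absurd h ha)

section VisitCount

variable {X : Type*} (f : X → X) (τ : X → ℕ) (s : Set X)

noncomputable def visitCount (y : X) : ℝ≥0∞ :=
  ∑ ℓ ∈ range (τ y), s.indicator (fun _ => (1 : ℝ≥0∞)) (f^[ℓ] y)

variable {f τ s}

theorem measurable_visitCount [MeasurableSpace X] (hf : Measurable f) (hτ : Measurable τ)
    (hs : MeasurableSet s) : Measurable (visitCount f τ s) := by
  have hpartial : Measurable fun p : ℕ × X =>
      ∑ ℓ ∈ range p.1, s.indicator (fun _ => (1 : ℝ≥0∞)) (f^[ℓ] p.2) :=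
    measurable_from_prod_countable_right fun m =>
      Finset.measurable_sum (range m) fun ℓ _ =>
        (measurable_const.indicator hs).comp (hf.iterate ℓ)
  exact hpartial.comp (hτ.prodMk measurable_id)

theorem visitCount_le (y : X) : visitCount f τ s y ≤ τ y := by
  calc visitCount f τ s y ≤ ∑ _ℓ ∈ range (τ y), (1 : ℝ≥0∞) :=
        sum_le_sum fun ℓ _ => Set.indicator_le_self' (fun _ _ => zero_le) _
    _ = τ y := by simp

theorem one_le_visitCount {y : X} {ℓ : ℕ} (hℓ : ℓ < τ y) (hy : f^[ℓ] y ∈ s) :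
    1 ≤ visitCount f τ s y := by
  rw [← Set.indicator_of_mem hy (fun _ => (1 : ℝ≥0∞))]
  exact single_le_sum (f := fun k => s.indicator (fun _ => (1 : ℝ≥0∞)) (f^[k] y))
    (fun _ _ => zero_le) (mem_range.mpr hℓ)

theorem setOf_lt_sum_iterate_subset {h : X → ℝ} (n : ℕ) {t : ℝ} (ht : 0 ≤ t) :
    {y | t < ∑ ℓ ∈ range (τ y), h (f^[ℓ] y)} ⊆
      {y | n < τ y} ∪ {y | 1 ≤ visitCount f τ {x | t / n < h x} y} := by
  intro y hy
  by_contra hout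
  simp only [Set.mem_union, Set.mem_ofPred_eq, not_or, not_lt, not_le] at hy hout
  refine hy.not_ge (sum_range_le_of_forall_le_div ht hout.1 fun ℓ hℓ => ?_)
  by_contra! hvisit
  exact hout.2.not_ge (one_le_visitCount hℓ hvisit)

end VisitCount

theorem stmt0_general {X : Type*} [MeasurableSpace X]
    (f : X → X) (hf : Measurable f)
    (μY : Measure X) [IsProbabilityMeasure μY]
    (τ : X → ℕ) (hτmeas : Measurable τ)
    (hτint : ∫⁻ y, (τ y : ℝ≥0∞) ∂μY < ⊤)
    (h : X → ℝ) (hh : Measurable h)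
    (H : X → ℝ) (hH : ∀ y, H y = ∑ ℓ ∈ Finset.range (τ y), h (f^[ℓ] y))
    (μX : Measure X)
    (hμX : ∀ s : Set X, MeasurableSet s →
      μX s = (∫⁻ y, (τ y : ℝ≥0∞) ∂μY)⁻¹ *
        ∫⁻ y, ∑ ℓ ∈ Finset.range (τ y),
          s.indicator (fun _ => (1 : ℝ≥0∞)) (f^[ℓ] y) ∂μY)
    (n : ℕ) (t : ℝ) (ht : 1 < t) :
    μY {y | t < H y} ≤ μY {y | n < τ y} +
      (∫⁻ y, (τ y : ℝ≥0∞) ∂μY) * μX {x | t / n < h x} := by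
  set S : Set X := {x | t / n < h x}
  have hS : MeasurableSet S := measurableSet_lt measurable_const hh
  have hvisits :
      (∫⁻ y, (τ y : ℝ≥0∞) ∂μY) * μX S = ∫⁻ y, visitCount f τ S y ∂μY := by
    rw [hμX S hS]
    exact ENNReal.mul_inv_mul_cancel_of_le hτint.ne (lintegral_mono visitCount_le)
  calc μY {y | t < H y}
      ≤ μY ({y | n < τ y} ∪ {y | 1 ≤ visitCount f τ S y}) := by
        simp only [hH]
        exact measure_mono (setOf_lt_sum_iterate_subset n (by linarith))
    _ ≤ μY {y | n < τ y} + μY {y | 1 ≤ visitCount f τ S y} := measure_union_le _ _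
    _ ≤ μY {y | n < τ y} + ∫⁻ y, visitCount f τ S y ∂μY := by
        gcongr
        simpa using mul_meas_ge_le_lintegral₀
          (measurable_visitCount hf hτmeas hS).aemeasurable 1 (μ := μY)
    _ = _ := by rw [hvisits]

/-- Proposition A.1: tail estimate for the induced roof function
`H(y) = ∑_{ℓ<τ(y)} h(f^ℓ y)`, where `μX` is the tower measure obtained from `μY`. -/
theorem stmt0 {X : Type*} [MeasurableSpace X]
    (f : X → X) (hf : Measurable f)
    (μY : Measure X) [IsProbabilityMeasure μY]
    (τ : X → ℕ) (hτmeas : Measurable τ) (hτpos : ∀ y, 1 ≤ τ y)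
    (hτint : ∫⁻ y, (τ y : ℝ≥0∞) ∂μY < ⊤)
    (h : X → ℝ) (hh : Measurable h) (hhpos : ∀ x, 0 < h x)
    (H : X → ℝ) (hH : ∀ y, H y = ∑ ℓ ∈ Finset.range (τ y), h (f^[ℓ] y))
    (μX : Measure X)
    (hμX : ∀ s : Set X, MeasurableSet s →
      μX s = (∫⁻ y, (τ y : ℝ≥0∞) ∂μY)⁻¹ *
        ∫⁻ y, ∑ ℓ ∈ Finset.range (τ y),
          s.indicator (fun _ => (1 : ℝ≥0∞)) (f^[ℓ] y) ∂μY)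
    (n : ℕ) (hn : 1 ≤ n) (t : ℝ) (ht : 1 < t) :
    μY {y | t < H y} ≤ μY {y | n < τ y} +
      (∫⁻ y, (τ y : ℝ≥0∞) ∂μY) * μX {x | t / n < h x} :=
  stmt0_general f hf μY τ hτmeas hτint h hh H hH μX hμX n t ht
end

section
/- Under the hypotheses of the induced roof function tail estimate, if $\mu_X(h>t)=O(e^{-ct})$ and $\mu_Y(\tau>n)=O(e^{-dn})$ for some $c,d>0$, then $\mu_Y(H>t)=O(e^{-(cdt)^{1/2}})$. -/
/-!
Take `n = ⌈s⌉` with `s = √(ct/d)`, the value balancing the two terms of the key inequality: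
then `dn ≥ ds = √(cdt)` and `ct/n ≥ ds²/(s+1) ≥ d(s-1)`, so both terms are
`O(e^{-√(cdt)})`. The bound `hX` needs `t/n ≥ 1`, which holds once `t` is large; for the
remaining bounded range of `t`, `μY(H > t) ≤ 1` suffices.
-/

open MeasureTheory
open scoped ENNReal

lemma exists_forall_le_ofReal_mul_exp_neg {u : ℝ → ℝ≥0∞} (hu : ∀ t, u t ≤ 1)
    {φ : ℝ → ℝ} (hφ : Monotone φ) (T M : ℝ)
    (hlarge : ∀ t, T < t → u t ≤ ENNReal.ofReal (M * Real.exp (-φ t))) :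
    ∃ C : ℝ, ∀ t, u t ≤ ENNReal.ofReal (C * Real.exp (-φ t)) := by
  refine ⟨max (Real.exp (φ T)) M, fun t => ?_⟩
  rcases le_or_gt t T with htT | hTt
  · have hone : 1 ≤ Real.exp (φ T) * Real.exp (-φ t) := by
      rw [← Real.exp_add]
      exact Real.one_le_exp (by linarith [hφ htT])
    calc u t ≤ ENNReal.ofReal 1 := by simpa using hu t
      _ ≤ _ := ENNReal.ofReal_le_ofReal <| hone.trans <| by gcongr; exact le_max_left _ _
  · exact (hlarge t hTt).trans <| ENNReal.ofReal_le_ofReal <| by gcongr; exact le_max_right _ _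

lemma ofReal_mul_exp_le_ofReal_abs_mul_exp {C x y : ℝ} (hxy : x ≤ y) :
    ENNReal.ofReal (C * Real.exp x) ≤ ENNReal.ofReal (|C| * Real.exp y) :=
  ENNReal.ofReal_le_ofReal <| mul_le_mul (le_abs_self C) (Real.exp_le_exp.2 hxy)
    (Real.exp_pos x).le (abs_nonneg C)

lemma sqrt_mul_mul_eq_mul_sqrt_div {c d t : ℝ} (hd : 0 < d) :
    √(c * d * t) = d * √(c * t / d) := by
  rw [show c * d * t = d ^ 2 * (c * t / d) by field_simp, Real.sqrt_mul (sq_nonneg d),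
    Real.sqrt_sq hd.le]

lemma exponents_le_of_sqrt_le {c d t n : ℝ} (hc : 0 < c) (hd : 0 < d) (ht : 0 < t)
    (hsn : √(c * t / d) ≤ n) (hns : n ≤ √(c * t / d) + 1) :
    -d * n ≤ -√(c * d * t) ∧ -c * (t / n) ≤ d + -√(c * d * t) := by
  set s := √(c * t / d)
  have hs : 0 < s := Real.sqrt_pos.2 (by positivity)
  have hn : 0 < n := hs.trans_le hsn
  have hct : c * t = d * s ^ 2 := by
    rw [Real.sq_sqrt (by positivity)]
    field_simp
  rw [sqrt_mul_mul_eq_mul_sqrt_div hd]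
  refine ⟨by nlinarith, ?_⟩
  have : d * (s - 1) * n ≤ c * t := by
    rw [hct]
    nlinarith [mul_le_mul_of_nonneg_left hns (by positivity : (0 : ℝ) ≤ d * s)]
  have : d * (s - 1) ≤ c * (t / n) := by
    rw [← mul_div_assoc, le_div_iff₀ hn]
    exact this
  linarith

lemma sqrt_mul_div_add_one_le {c d t : ℝ} (ht : (√(c / d) + 1) ^ 2 ≤ t) :
    √(c * t / d) + 1 ≤ t := by
  have ht0 : 0 ≤ t := (sq_nonneg _).trans ht
  have hroot : √(c / d) + 1 ≤ √t := by
    simpa [Real.sqrt_sq (by positivity : 0 ≤ √(c / d) + 1)] using Real.sqrt_le_sqrt ht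
  rw [mul_div_right_comm, Real.sqrt_mul' _ ht0]
  nlinarith [Real.sq_sqrt ht0, Real.sqrt_nonneg (c / d), Real.sqrt_nonneg t]

theorem stmt1_general {Y X : Type*} [MeasurableSpace Y] [MeasurableSpace X]
    (μY : Measure Y) [IsProbabilityMeasure μY]
    (μX : Measure X)
    (H : Y → ℝ) (τ : Y → ℕ) (h : X → ℝ)
    (τbar : ℝ≥0∞) (hτbar : τbar ≠ ⊤)
    (key : ∀ n : ℕ, 1 ≤ n → ∀ t : ℝ, 1 < t →
      μY {y | t < H y} ≤ μY {y | n < τ y} + τbar * μX {x | t / n < h x})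
    (c d : ℝ) (hc : 0 < c) (hd : 0 < d)
    (C₁ C₂ : ℝ)
    (hX : ∀ t : ℝ, 1 ≤ t → μX {x | t < h x} ≤ ENNReal.ofReal (C₁ * Real.exp (-c * t)))
    (hY : ∀ n : ℕ, 1 ≤ n → μY {y | n < τ y} ≤ ENNReal.ofReal (C₂ * Real.exp (-d * n))) :
    ∃ C : ℝ, ∀ t : ℝ, 1 ≤ t →
      μY {y | t < H y} ≤ ENNReal.ofReal (C * Real.exp (-Real.sqrt (c * d * t))) := by
  have hφ : Monotone fun t => √(c * d * t) := fun _ _ hst =>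
    Real.sqrt_le_sqrt (mul_le_mul_of_nonneg_left hst (mul_pos hc hd).le)
  refine (exists_forall_le_ofReal_mul_exp_neg (fun _ => prob_le_one) hφ
    (max 1 ((√(c / d) + 1) ^ 2)) (|C₂| + τbar.toReal * (|C₁| * Real.exp d)) ?_).imp
    fun C hC t _ => hC t
  intro t ht
  obtain ⟨ht1, htT⟩ := max_lt_iff.1 ht
  set n := ⌈√(c * t / d)⌉₊
  have hsn : √(c * t / d) ≤ n := Nat.le_ceil _
  have hns : (n : ℝ) ≤ √(c * t / d) + 1 := (Nat.ceil_lt_add_one (Real.sqrt_nonneg _)).le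
  have hn : 1 ≤ n := Nat.one_le_iff_ne_zero.2 <| by
    simpa [n] using Real.sqrt_pos.2 (by positivity : 0 < c * t / d)
  have htn : 1 ≤ t / n :=
    (one_le_div (by exact_mod_cast hn)).2 (hns.trans (sqrt_mul_div_add_one_le htT.le))
  obtain ⟨hexpY, hexpX⟩ := exponents_le_of_sqrt_le hc hd (by linarith) hsn hns
  calc μY {y | t < H y} ≤ μY {y | n < τ y} + τbar * μX {x | t / n < h x} := key n hn t ht1
    _ ≤ ENNReal.ofReal (|C₂| * Real.exp (-√(c * d * t))) +
        ENNReal.ofReal τbar.toReal * ENNReal.ofReal (|C₁| * Real.exp (d + -√(c * d * t))) := by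
      rw [ENNReal.ofReal_toReal hτbar]
      gcongr
      · exact (hY n hn).trans (ofReal_mul_exp_le_ofReal_abs_mul_exp hexpY)
      · exact (hX _ htn).trans (ofReal_mul_exp_le_ofReal_abs_mul_exp hexpX)
    _ = _ := by
      rw [← ENNReal.ofReal_mul ENNReal.toReal_nonneg, ← ENNReal.ofReal_add (by positivity)
        (by positivity), Real.exp_add]
      ring_nf

/-- Remark A.2(b): if `μX(h>t) = O(e^{-ct})` and `μY(τ>n) = O(e^{-dn})`, then the
induced roof function satisfies `μY(H>t) = O(e^{-(cdt)^{1/2}})`, given the key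
tail inequality `μY(H>t) ≤ μY(τ>n) + τ̄ μX(h>t/n)` for all `n ≥ 1`, `t > 1`. -/
theorem stmt1 {Y X : Type*} [MeasurableSpace Y] [MeasurableSpace X]
    (μY : Measure Y) [IsProbabilityMeasure μY]
    (μX : Measure X) [IsProbabilityMeasure μX]
    (H : Y → ℝ) (τ : Y → ℕ) (h : X → ℝ)
    (τbar : ℝ≥0∞) (hτbar : τbar ≠ ⊤)
    (key : ∀ n : ℕ, 1 ≤ n → ∀ t : ℝ, 1 < t →
      μY {y | t < H y} ≤ μY {y | n < τ y} + τbar * μX {x | t / n < h x})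
    (c d : ℝ) (hc : 0 < c) (hd : 0 < d)
    (C₁ C₂ : ℝ)
    (hX : ∀ t : ℝ, 1 ≤ t → μX {x | t < h x} ≤ ENNReal.ofReal (C₁ * Real.exp (-c * t)))
    (hY : ∀ n : ℕ, 1 ≤ n → μY {y | n < τ y} ≤ ENNReal.ofReal (C₂ * Real.exp (-d * n))) :
    ∃ C : ℝ, ∀ t : ℝ, 1 ≤ t →
      μY {y | t < H y} ≤ ENNReal.ofReal (C * Real.exp (-Real.sqrt (c * d * t))) :=
  stmt1_general μY μX H τ h τbar hτbar key c d hc hd C₁ C₂ hX hY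
end

section
/- Under the hypotheses of the induced roof function tail estimate, if $\mu_X(h>t)=O(t^{-\beta_1})$ and $\mu_Y(\tau>n)=O(n^{-\beta_2})$ for some $\beta_1,\beta_2>0$, then $\mu_Y(H>t)=O(t^{-\beta})$ where $\beta=\beta_1\beta_2/(\beta_1+\beta_2)$. -/
open MeasureTheory
open scoped ENNReal

/-!
Split the orbit at `n ≈ t^γ` with `γ = β₁/(β₁+β₂)`: the return-time tail contributes
`n^{-β₂} ≤ t^{-γβ₂}` and the observable tail `(t/n)^{-β₁} ≲ t^{-(1-γ)β₁}`; this choice of `γ`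
makes both exponents equal to `β₁β₂/(β₁+β₂)`.
-/

lemma measure_lt_le_of_forall_one_lt {Ω : Type*} [MeasurableSpace Ω] {μ : Measure Ω}
    [IsProbabilityMeasure μ] {f : Ω → ℝ} {C β : ℝ} (hβ : 0 ≤ β)
    (hf : ∀ t : ℝ, 1 < t → μ {x | t < f x} ≤ ENNReal.ofReal (C * t ^ (-β)))
    {t : ℝ} (ht : 0 < t) :
    μ {x | t < f x} ≤ ENNReal.ofReal (max C 1 * t ^ (-β)) := by
  rcases lt_or_ge 1 t with h1 | h1
  · exact (hf t h1).trans <| ENNReal.ofReal_le_ofReal <|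
      mul_le_mul_of_nonneg_right (le_max_left _ _) (Real.rpow_nonneg ht.le _)
  · calc μ {x | t < f x} ≤ 1 := prob_le_one
      _ ≤ ENNReal.ofReal (max C 1 * t ^ (-β)) := by
        rw [ENNReal.one_le_ofReal]
        exact one_le_mul_of_one_le_of_one_le (le_max_right _ _)
          (Real.one_le_rpow_of_pos_of_le_one_of_nonpos ht h1 (neg_nonpos.2 hβ))

lemma natCeil_rpow_rpow_neg_le {t : ℝ} (ht : 0 < t) (γ : ℝ) {β : ℝ} (hβ : 0 ≤ β) :
    (⌈t ^ γ⌉₊ : ℝ) ^ (-β) ≤ t ^ (-(γ * β)) := by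
  rw [← mul_neg, Real.rpow_mul ht.le]
  exact Real.rpow_le_rpow_of_nonpos (Real.rpow_pos_of_pos ht γ) (Nat.le_ceil _)
    (neg_nonpos.2 hβ)

lemma div_natCeil_rpow_rpow_neg_le {t γ β : ℝ} (ht : 1 ≤ t) (hγ : 0 ≤ γ) (hβ : 0 ≤ β) :
    (t / ⌈t ^ γ⌉₊) ^ (-β) ≤ 2 ^ β * t ^ (-((1 - γ) * β)) := by
  have ht0 : 0 < t := by linarith
  have hx : 1 ≤ t ^ γ := Real.one_le_rpow ht hγ
  have hn : (⌈t ^ γ⌉₊ : ℝ) ≤ 2 * t ^ γ := (Nat.ceil_lt_two_mul (by linarith)).le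
  have hn0 : (0 : ℝ) < ⌈t ^ γ⌉₊ := Nat.cast_pos.2 (Nat.ceil_pos.2 (by linarith))
  calc (t / ⌈t ^ γ⌉₊) ^ (-β) ≤ (t ^ (1 - γ) / 2) ^ (-β) := by
        refine Real.rpow_le_rpow_of_nonpos (by positivity) ?_ (neg_nonpos.2 hβ)
        rw [Real.rpow_sub ht0, Real.rpow_one, div_div, mul_comm]
        exact div_le_div_of_nonneg_left ht0.le hn0 hn
    _ = 2 ^ β * t ^ (-((1 - γ) * β)) := by
        rw [Real.div_rpow (by positivity) zero_le_two, ← Real.rpow_mul ht0.le,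
          Real.rpow_neg zero_le_two, div_inv_eq_mul, mul_neg, mul_comm]

lemma ofReal_mul_add_mul_ofReal_mul {c : ℝ≥0∞} (hc : c ≠ ⊤) {a b x : ℝ}
    (ha : 0 ≤ a) (hb : 0 ≤ b) (hx : 0 ≤ x) :
    ENNReal.ofReal (a * x) + c * ENNReal.ofReal (b * x) =
      ENNReal.ofReal ((a + c.toReal * b) * x) := by
  rw [add_mul, ENNReal.ofReal_add (by positivity) (by positivity), mul_assoc,
    ENNReal.ofReal_mul ENNReal.toReal_nonneg, ENNReal.ofReal_toReal hc]

/-- Remark A.2(d): if `μX(h>t) = O(t^{-β₁})` and `μY(τ>n) = O(n^{-β₂})`, then the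
induced roof function satisfies `μY(H>t) = O(t^{-β})` with `β = β₁β₂/(β₁+β₂)`,
given the key tail inequality `μY(H>t) ≤ μY(τ>n) + τ̄ μX(h>t/n)` for `n ≥ 1`, `t > 1`. -/
theorem stmt2 {Y X : Type*} [MeasurableSpace Y] [MeasurableSpace X]
    (μY : Measure Y) [IsProbabilityMeasure μY]
    (μX : Measure X) [IsProbabilityMeasure μX]
    (H : Y → ℝ) (τ : Y → ℕ) (h : X → ℝ)
    (τbar : ℝ≥0∞) (hτbar : τbar ≠ ⊤)
    (key : ∀ n : ℕ, 1 ≤ n → ∀ t : ℝ, 1 < t →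
      μY {y | t < H y} ≤ μY {y | n < τ y} + τbar * μX {x | t / n < h x})
    (β₁ β₂ : ℝ) (hβ₁ : 0 < β₁) (hβ₂ : 0 < β₂)
    (C₁ C₂ : ℝ)
    (hX : ∀ t : ℝ, 1 ≤ t → μX {x | t < h x} ≤ ENNReal.ofReal (C₁ * t ^ (-β₁)))
    (hY : ∀ n : ℕ, 1 ≤ n → μY {y | n < τ y} ≤ ENNReal.ofReal (C₂ * (n : ℝ) ^ (-β₂))) :
    ∃ C : ℝ, ∀ t : ℝ, 1 ≤ t →
      μY {y | t < H y} ≤ ENNReal.ofReal (C * t ^ (-(β₁ * β₂ / (β₁ + β₂)))) := by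
  have hβ₁₂ : 0 < β₁ + β₂ := add_pos hβ₁ hβ₂
  set β := β₁ * β₂ / (β₁ + β₂)
  set γ := β₁ / (β₁ + β₂)
  have hγβ₂ : γ * β₂ = β := by simp only [β, γ]; field_simp
  have hγβ₁ : (1 - γ) * β₁ = β := by simp only [β, γ]; field_simp; ring
  refine ⟨max (max C₂ 0 + τbar.toReal * (max C₁ 1 * 2 ^ β₁)) 1, fun t ht ↦
    measure_lt_le_of_forall_one_lt (by positivity) (fun t ht ↦ ?_) (by linarith)⟩
  have ht0 : 0 < t := by linarith
  have hn : 1 ≤ ⌈t ^ γ⌉₊ := Nat.one_le_iff_ne_zero.2 (Nat.ceil_pos.2 (by positivity)).ne'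
  calc μY {y | t < H y}
      ≤ μY {y | ⌈t ^ γ⌉₊ < τ y} + τbar * μX {x | t / ⌈t ^ γ⌉₊ < h x} := key _ hn t ht
    _ ≤ ENNReal.ofReal (max C₂ 0 * t ^ (-β)) +
        τbar * ENNReal.ofReal ((max C₁ 1 * 2 ^ β₁) * t ^ (-β)) := by
      gcongr
      · refine (hY _ hn).trans (ENNReal.ofReal_le_ofReal (mul_le_mul (le_max_left _ _) ?_
          (by positivity) (le_max_right _ _)))
        exact hγβ₂ ▸ natCeil_rpow_rpow_neg_le ht0 γ hβ₂.le
      · refine (measure_lt_le_of_forall_one_lt hβ₁.le (fun s hs ↦ hX s hs.le)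
          (by positivity)).trans (ENNReal.ofReal_le_ofReal ?_)
        rw [mul_assoc]
        refine mul_le_mul_of_nonneg_left ?_ (by positivity)
        exact hγβ₁ ▸ div_natCeil_rpow_rpow_neg_le ht.le (by positivity) hβ₁.le
    _ = ENNReal.ofReal ((max C₂ 0 + τbar.toReal * (max C₁ 1 * 2 ^ β₁)) * t ^ (-β)) :=
      ofReal_mul_add_mul_ofReal_mul hτbar (le_max_right _ _) (by positivity) (by positivity)
end

section
/- In the setting of a suspension semiflow over an ergodic map $F:Y\to Y$ with roof $H\in L^2(Y)$, $\inf H>0$: let $v:M\to\mathbb{R}^d$ be bounded, define $g(y)=\int_0^{H(y)}|v(T_sy)|\,ds$ and $\psi(y,u)=\int_0^u v(T_sy)\,ds$. Then $g\le|v|_\infty H\in L^2(Y)$, and $n^{-1/2}\sup_{t\in[0,T]}|\psi\circ f_{nt}|\to0$ almost everywhere on the suspension $Y^H$ as $n\to\infty$, for each fixed $T>0$. -/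
open MeasureTheory Filter

/-! Since `H ∈ L²` and `F` preserves `μ`, the Borel–Cantelli lemma applied to the sets
`{m² H² > k}` shows that `H ∘ F^k = o(√k)` almost surely, hence also
`max_{k ≤ c n} H ∘ F^k = o(√n)`. Up to time `n T'` the semiflow completes at most `n T' / h₀`
laps, and along the lap `N` in progress `|ψ ∘ f_t| ≤ |v|_∞ (2u + H (F^N y))`. -/

open Asymptotics Finset

namespace MeasureTheory.MeasurePreserving

variable {α : Type*} [MeasurableSpace α] {μ : Measure α} [IsProbabilityMeasure μ] {f : α → α}

theorem ae_eventually_iterate_le_of_integrable (hf : MeasurePreserving f μ μ) {X : α → ℝ}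
    (hX : Integrable X μ) (hX0 : 0 ≤ X) : ∀ᵐ x ∂μ, ∀ᶠ k : ℕ in atTop, X (f^[k] x) ≤ k := by
  let _ : MeasureSpace α := ⟨μ⟩
  have hsum : ∑' k : ℕ, μ (f^[k] ⁻¹' {x | (k : ℝ) < X x}) ≠ ⊤ := by
    rw [tsum_congr fun k => (hf.iterate k).measure_preimage
      (nullMeasurableSet_lt aemeasurable_const hX.aemeasurable)]
    exact (ProbabilityTheory.tsum_prob_mem_Ioi_lt_top hX hX0).ne
  filter_upwards [ae_eventually_notMem hsum] with x hx
  filter_upwards [hx] with k hk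
  simpa using hk

theorem isLittleO_sqrt_iterate_of_memLp_two (hf : MeasurePreserving f μ μ) {h : α → ℝ}
    (hh : MemLp h 2 μ) :
    ∀ᵐ x ∂μ, (fun k : ℕ => h (f^[k] x)) =o[atTop] (fun k : ℕ => √(k : ℝ)) := by
  have hm : ∀ m : ℕ, ∀ᵐ x ∂μ, ∀ᶠ k : ℕ in atTop, (m * h (f^[k] x)) ^ 2 ≤ k := fun m =>
    hf.ae_eventually_iterate_le_of_integrable (X := fun x => (m * h x) ^ 2)
      (hh.const_mul _).integrable_sq fun x => sq_nonneg _
  filter_upwards [ae_all_iff.2 hm] with x hx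
  refine isLittleO_iff_nat_mul_le.2 fun m => ?_
  filter_upwards [hx m] with k hk
  calc (m : ℝ) * ‖h (f^[k] x)‖ = |m * h (f^[k] x)| := by
        rw [abs_mul, Nat.abs_cast, Real.norm_eq_abs]
    _ ≤ √(k : ℝ) := Real.abs_le_sqrt hk
    _ = ‖√(k : ℝ)‖ := (Real.norm_of_nonneg (Real.sqrt_nonneg _)).symm

end MeasureTheory.MeasurePreserving

theorem tendsto_sqrt_natCast_atTop : Tendsto (fun n : ℕ => √(n : ℝ)) atTop atTop :=
  Real.tendsto_sqrt_atTop.comp tendsto_natCast_atTop_atTop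

theorem Asymptotics.IsLittleO.sup'_norm_range_floor_mul {a : ℕ → ℝ}
    (ha : a =o[atTop] (fun k : ℕ => √(k : ℝ))) {c : ℝ} (hc : 0 ≤ c) :
    (fun n : ℕ => (range (⌊c * n⌋₊ + 1)).sup' nonempty_range_add_one fun k => ‖a k‖)
      =o[atTop] (fun n : ℕ => √(n : ℝ)) := by
  refine isLittleO_iff.2 fun ε hε => ?_
  set δ := ε / (√c + 1)
  have hδ : δ * √c ≤ ε := by
    rw [div_mul_eq_mul_div, div_le_iff₀ (by positivity)]
    nlinarith [Real.sqrt_nonneg c]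
  obtain ⟨M, hM⟩ := (ha.def (by positivity : 0 < δ)).exists_forall_of_atTop
  have hsmall : ∀ᶠ n : ℕ in atTop, ∀ k ∈ range M, ‖a k‖ ≤ ε * √(n : ℝ) :=
    (eventually_all_finset _).2 fun k _ =>
      (tendsto_sqrt_natCast_atTop.const_mul_atTop hε).eventually_ge_atTop _
  filter_upwards [hsmall] with n hn
  rw [Real.norm_of_nonneg (Real.sqrt_nonneg _), Real.norm_of_nonneg
    ((norm_nonneg (a 0)).trans (le_sup' (fun k => ‖a k‖) (mem_range.2 (Nat.succ_pos _))))]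
  refine sup'_le _ _ fun k hk => ?_
  rcases lt_or_ge k M with hkM | hkM
  · exact hn k (mem_range.2 hkM)
  have hkn : (k : ℝ) ≤ c * n :=
    (Nat.cast_le.2 (mem_range_succ_iff.1 hk)).trans (Nat.floor_le (by positivity))
  calc ‖a k‖ ≤ δ * √(k : ℝ) := by simpa [abs_of_nonneg (Real.sqrt_nonneg _)] using hM k hkM
    _ ≤ δ * √c * √(n : ℝ) := by
      rw [mul_assoc, ← Real.sqrt_mul hc]
      gcongr
    _ ≤ ε * √(n : ℝ) := by gcongr

theorem lap_bounds {a : ℕ → ℝ} {h₀ u τ : ℝ} {N : ℕ} (hh₀ : 0 < h₀) (ha : ∀ k, h₀ ≤ a k)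
    (hu : 0 ≤ u) (hτ : 0 ≤ τ) (hN : N = sSup {n : ℕ | u + ∑ j ∈ range n, a j ≤ τ}) :
    N * h₀ ≤ τ ∧ 0 ≤ u + τ - ∑ j ∈ range N, a j ∧ u + τ - ∑ j ∈ range N, a j ≤ 2 * u + a N := by
  set P := {n : ℕ | u + ∑ j ∈ range n, a j ≤ τ}
  have hlin : ∀ n : ℕ, n * h₀ ≤ ∑ j ∈ range n, a j := fun n => by
    simpa using card_nsmul_le_sum (range n) a h₀ fun j _ => ha j
  have hP : ∀ n ∈ P, (n : ℝ) * h₀ ≤ τ := fun n hn => by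
    have : u + ∑ j ∈ range n, a j ≤ τ := hn
    linarith [hlin n]
  have hbdd : BddAbove P := ⟨⌈τ / h₀⌉₊, fun n hn =>
    Nat.cast_le.1 (((le_div_iff₀ hh₀).2 (hP n hn)).trans (Nat.le_ceil _))⟩
  have hnext : τ < u + ∑ j ∈ range N, a j + a N := by
    by_contra! h
    have : N + 1 ∈ P := by simpa [P, sum_range_succ, ← add_assoc] using h
    have := hN ▸ le_csSup hbdd this
    omega
  have hmem : N = 0 ∨ N ∈ P := by
    rcases P.eq_empty_or_nonempty with hPe | hPn
    · exact .inl (by rw [hN, hPe, csSup_empty]; rfl)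
    · exact .inr (hN ▸ Nat.sSup_mem hPn hbdd)
  have hS : 0 ≤ ∑ j ∈ range N, a j := (by positivity : (0 : ℝ) ≤ N * h₀).trans (hlin N)
  refine ⟨?_, ?_, by linarith⟩ <;> rcases hmem with h | h
  · simp [h, hτ]
  · exact hP N h
  · simp only [h, range_zero, sum_empty, sub_zero]
    positivity
  · have : u + ∑ j ∈ range N, a j ≤ τ := h
    linarith

theorem norm_intervalIntegral_zero_le_mul {E : Type*} [NormedAddCommGroup E] [NormedSpace ℝ E]
    {f : ℝ → E} {C w : ℝ} (hw : 0 ≤ w) (hf : ∀ s, ‖f s‖ ≤ C) :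
    ‖∫ s in (0 : ℝ)..w, f s‖ ≤ C * w := by
  simpa [abs_of_nonneg hw] using
    intervalIntegral.norm_integral_le_of_norm_le_const (a := 0) (b := w) fun s _ => hf s

theorem tendsto_rpow_neg_half_mul_iSup_norm_lap {E : Type*} [NormedAddCommGroup E]
    {a : ℕ → ℝ} {h₀ u T' C : ℝ} (hh₀ : 0 < h₀) (ha : ∀ k, h₀ ≤ a k)
    (ha_o : a =o[atTop] (fun k : ℕ => √(k : ℝ))) (hu : 0 ≤ u) (hT' : 0 ≤ T')
    {Ψ : ℕ → ℝ → E} (hΨ : ∀ k w, 0 ≤ w → ‖Ψ k w‖ ≤ C * w)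
    {N : ℝ → ℕ} (hN : ∀ τ, N τ = sSup {n : ℕ | u + ∑ j ∈ range n, a j ≤ τ}) :
    Tendsto (fun n : ℕ => (n : ℝ) ^ (-(1/2 : ℝ)) * ⨆ t : Set.Icc (0 : ℝ) T',
      ‖Ψ (N (n * t)) (u + n * t - ∑ j ∈ range (N (n * t)), a j)‖) atTop (nhds 0) := by
  have hC : 0 ≤ C := by simpa using (norm_nonneg _).trans (hΨ 0 1 zero_le_one)
  set m := fun n : ℕ => (range (⌊T' / h₀ * n⌋₊ + 1)).sup' nonempty_range_add_one fun k => ‖a k‖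
  have hbound : ∀ (n : ℕ) (t : Set.Icc (0 : ℝ) T'),
      ‖Ψ (N (n * t)) (u + n * t - ∑ j ∈ range (N (n * t)), a j)‖ ≤ C * (2 * u + m n) := by
    rintro n ⟨t, ht0, htT⟩
    obtain ⟨hlap, hw0, hw⟩ := lap_bounds hh₀ ha hu (by positivity) (hN (n * t))
    have hNn : N (n * t) ≤ ⌊T' / h₀ * n⌋₊ := Nat.le_floor <| by
      rw [div_mul_eq_mul_div, le_div_iff₀ hh₀]
      nlinarith [(n.cast_nonneg : (0 : ℝ) ≤ n)]
    have hm : a (N (n * t)) ≤ m n :=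
      (Real.le_norm_self _).trans (le_sup' (fun k => ‖a k‖) (mem_range_succ_iff.2 hNn))
    calc _ ≤ C * _ := hΨ _ _ hw0
      _ ≤ C * (2 * u + m n) := by gcongr; linarith
  have hsqrt : Tendsto (norm ∘ fun n : ℕ => √(n : ℝ)) atTop atTop :=
    tendsto_sqrt_natCast_atTop.congr fun n => (Real.norm_of_nonneg (Real.sqrt_nonneg _)).symm
  have hlim : Tendsto (fun n : ℕ => C * (2 * u + m n) / √(n : ℝ)) atTop (nhds 0) :=
    (((isLittleO_const_left.2 (.inr hsqrt)).add
      (ha_o.sup'_norm_range_floor_mul (by positivity))).const_mul_left C).tendsto_div_nhds_zero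
  have : Nonempty (Set.Icc (0 : ℝ) T') := ⟨⟨0, le_rfl, hT'⟩⟩
  refine squeeze_zero (fun n => mul_nonneg (Real.rpow_nonneg n.cast_nonneg _)
    (Real.iSup_nonneg fun _ => norm_nonneg _)) (fun n => ?_) hlim
  rw [Real.rpow_neg n.cast_nonneg, ← Real.sqrt_eq_rpow, inv_mul_eq_div]
  gcongr
  exact ciSup_le (hbound n)

theorem stmt18_general {M Y : Type*} [MetricSpace M] [MeasurableSpace Y]
    (μ : Measure Y) [IsProbabilityMeasure μ]
    (T : ℝ → M → M) (incl : Y → M) (F : Y → Y) (hF : Ergodic F μ)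
    (H : Y → ℝ) (hH2 : MemLp H 2 μ)
    (h₀ : ℝ) (hh₀ : 0 < h₀) (hinf : ∀ y, h₀ ≤ H y)
    {d : ℕ} (v : M → EuclideanSpace ℝ (Fin d)) (vB : ℝ) (hvB : ∀ x, ‖v x‖ ≤ vB)
    (g : Y → ℝ) (hg : ∀ y, g y = ∫ s in (0:ℝ)..(H y), ‖v (T s (incl y))‖)
    (ψ : Y → ℝ → EuclideanSpace ℝ (Fin d))
    (hψ : ∀ y u, ψ y u = ∫ s in (0:ℝ)..u, v (T s (incl y)))
    (N : ℝ → Y → ℝ → ℕ)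
    (hN : ∀ t y u, N t y u = sSup {n : ℕ | u + ∑ j ∈ Finset.range n, H (F^[j] y) ≤ t}) :
    (∀ y, g y ≤ vB * H y) ∧
    ∀ T' : ℝ, 0 < T' →
      ∀ᵐ y ∂μ, ∀ u ∈ Set.Icc (0:ℝ) (H y),
        Tendsto (fun n : ℕ =>
            (n : ℝ) ^ (-(1/2 : ℝ)) *
              ⨆ t : Set.Icc (0:ℝ) T',
                ‖ψ (F^[N ((n : ℝ) * (t : ℝ)) y u] y)
                    ((u + (n : ℝ) * (t : ℝ)) -
                      ∑ j ∈ Finset.range (N ((n : ℝ) * (t : ℝ)) y u), H (F^[j] y))‖)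
          atTop (nhds 0) := by
  refine ⟨fun y => ?_, fun T' hT' => ?_⟩
  · rw [hg]
    exact (Real.le_norm_self _).trans <| norm_intervalIntegral_zero_le_mul
      (hh₀.le.trans (hinf y)) fun s => (norm_norm _).trans_le (hvB _)
  filter_upwards [hF.toMeasurePreserving.isLittleO_sqrt_iterate_of_memLp_two hH2] with y hy u hu
  exact tendsto_rpow_neg_half_mul_iSup_norm_lap hh₀ (fun k => hinf (F^[k] y)) hy hu.1 hT'.le
    (Ψ := fun k => ψ (F^[k] y)) (N := fun τ => N τ y u)
    (fun k w hw => by rw [hψ]; exact norm_intervalIntegral_zero_le_mul hw fun s => hvB _)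
    (fun τ => hN τ y u)

/-- Claim (b) in the proof of Theorem 2.5: with `g(y) = ∫_0^{H(y)} |v(T_s y)| ds` and
`ψ(y,u) = ∫_0^u v(T_s y) ds`, one has `g ≤ |v|_∞ H ∈ L²`, and
`n^{-1/2} sup_{t∈[0,T]} |ψ∘f_{nt}| → 0` almost everywhere on the suspension, where
`ψ∘f_t(y,u) = ψ(F^{N(t)(y,u)}y, u + t - ∑_{j<N} H(F^j y))` with lap number `N`. -/
theorem stmt18 {M Y : Type*} [MetricSpace M] [MeasurableSpace Y]
    (μ : Measure Y) [IsProbabilityMeasure μ]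
    (T : ℝ → M → M) (incl : Y → M) (F : Y → Y) (hF : Ergodic F μ)
    (H : Y → ℝ) (hHmeas : Measurable H) (hH2 : MemLp H 2 μ)
    (h₀ : ℝ) (hh₀ : 0 < h₀) (hinf : ∀ y, h₀ ≤ H y)
    (hret : ∀ y, T (H y) (incl y) = incl (F y))
    {d : ℕ} (v : M → EuclideanSpace ℝ (Fin d)) (vB : ℝ) (hvB : ∀ x, ‖v x‖ ≤ vB)
    (g : Y → ℝ) (hg : ∀ y, g y = ∫ s in (0:ℝ)..(H y), ‖v (T s (incl y))‖)
    (ψ : Y → ℝ → EuclideanSpace ℝ (Fin d))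
    (hψ : ∀ y u, ψ y u = ∫ s in (0:ℝ)..u, v (T s (incl y)))
    (N : ℝ → Y → ℝ → ℕ)
    (hN : ∀ t y u, N t y u = sSup {n : ℕ | u + ∑ j ∈ Finset.range n, H (F^[j] y) ≤ t}) :
    (∀ y, g y ≤ vB * H y) ∧
    ∀ T' : ℝ, 0 < T' →
      ∀ᵐ y ∂μ, ∀ u ∈ Set.Icc (0:ℝ) (H y),
        Tendsto (fun n : ℕ =>
            (n : ℝ) ^ (-(1/2 : ℝ)) *
              ⨆ t : Set.Icc (0:ℝ) T',
                ‖ψ (F^[N ((n : ℝ) * (t : ℝ)) y u] y)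
                    ((u + (n : ℝ) * (t : ℝ)) -
                      ∑ j ∈ Finset.range (N ((n : ℝ) * (t : ℝ)) y u), H (F^[j] y))‖)
          atTop (nhds 0) :=
  stmt18_general μ T incl F hF H hH2 h₀ hh₀ hinf v vB hvB g hg ψ hψ N hN
end
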